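/- arXiv:1506.02723 — 2 statements merged into one kernel-verified Lean document; each statement's English description precedes it below -/
import Mathlib

section
/- Let n ≥ 1, let s : ℝⁿ → ℝ be C^∞, let ℓ ≥ 1 be an integer, and suppose there is a C^∞ function A with ‖∇s(x)‖² = 1 + s(x)^ℓ · A(x) for all x. Suppose f : ℝⁿ → ℝ is C^∞ and s′ := s · (1 + s^ℓ · f) satisfies ‖∇s′(x)‖² = 1 + s(x)^(ℓ+1) · A″(x) for all x, for some C^∞ function A″. Then there exists a C^∞ function g such that f(x) = −A(x)/(2(ℓ+1)) + s(x) · g(x) for all x. -/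
/-!
Since `∇(s(1 + sˡf)) = (1 + (ℓ+1)sˡf)∇s + s^(ℓ+1)∇f` and `‖∇s‖² = 1 + sˡA`, expanding the
squared norm turns the second hypothesis into `sˡ · (2(ℓ+1)f + A + s(R - A'')) = 0` for an
explicit smooth `R`. Because `‖∇s‖² = 1` on the zero set of `s`, the function `s` vanishes on no
open set, so `{s ≠ 0}` is dense and the bracket vanishes identically by continuity; then
`g = (A'' - R) / (2(ℓ+1))`.
-/

open InnerProductSpace Filter Topology

section Gradient

variable {F : Type*} [NormedAddCommGroup F] [InnerProductSpace ℝ F] [CompleteSpace F]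
  {f g : F → ℝ} {f' g' x : F}

theorem HasGradientAt.add (hf : HasGradientAt f f' x) (hg : HasGradientAt g g' x) :
    HasGradientAt (fun y => f y + g y) (f' + g') x := by
  rw [hasGradientAt_iff_hasFDerivAt] at *
  exact (map_add (toDual ℝ F) f' g') ▸ hf.add hg

theorem HasGradientAt.mul (hf : HasGradientAt f f' x) (hg : HasGradientAt g g' x) :
    HasGradientAt (fun y => f y * g y) (f x • g' + g x • f') x := by
  rw [hasGradientAt_iff_hasFDerivAt] at *
  rw [map_add, map_smul, map_smul]
  exact hf.mul hg

theorem HasGradientAt.pow (hf : HasGradientAt f f' x) (n : ℕ) :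
    HasGradientAt (fun y => f y ^ n) ((n * f x ^ (n - 1)) • f') x := by
  rw [hasGradientAt_iff_hasFDerivAt] at *
  simpa only [map_smul, nsmul_eq_mul] using hf.pow n

theorem HasGradientAt.mul_one_add_pow_mul (hs : HasGradientAt g g' x) (hf : HasGradientAt f f' x)
    (ℓ : ℕ) : HasGradientAt (fun y => g y * (1 + g y ^ ℓ * f y))
      ((1 + (ℓ + 1) * g x ^ ℓ * f x) • g' + g x ^ (ℓ + 1) • f') x := by
  convert hs.add ((hs.pow (ℓ + 1)).mul hf) using 1
  · ext y; ring
  · simp only [Nat.add_sub_cancel, Nat.cast_add, Nat.cast_one]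
    match_scalars <;> ring

theorem ContDiff.gradient {m n : WithTop ℕ∞} (hf : ContDiff ℝ n f) (hmn : m + 1 ≤ n) :
    ContDiff ℝ m (gradient f) :=
  (toDual ℝ F).symm.contDiff.comp (hf.fderiv_right hmn)

theorem dense_setOf_ne_zero_of_gradient_ne_zero (h : ∀ x, f x = 0 → gradient f x ≠ 0) :
    Dense {x | f x ≠ 0} := by
  intro x
  by_contra hx
  rw [mem_closure_iff_frequently, not_frequently] at hx
  simp only [Set.mem_ofPred_eq, not_not] at hx
  have hf : f =ᶠ[𝓝 x] fun _ => 0 := hx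
  exact h x hx.self_of_nhds (hf.gradient_eq.trans (gradient_fun_const x 0))

end Gradient

theorem Dense.eq_of_pow_mul_eq {X K : Type*} [TopologicalSpace X] [TopologicalSpace K]
    [T2Space K] [MonoidWithZero K] [IsCancelMulZero K] {s u v : X → K}
    (hs : Dense {x | s x ≠ 0}) (hu : Continuous u) (hv : Continuous v) (ℓ : ℕ)
    (h : ∀ x, s x ^ ℓ * u x = s x ^ ℓ * v x) : u = v :=
  hu.ext_on hs hv fun x hx => mul_left_cancel₀ (pow_ne_zero ℓ hx) (h x)

theorem unit_defining_function_step_unique_general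
    (n : ℕ) (s A f A'' : EuclideanSpace ℝ (Fin n) → ℝ)
    (hs : ContDiff ℝ (⊤ : ℕ∞) s) (hA : ContDiff ℝ (⊤ : ℕ∞) A)
    (hf : ContDiff ℝ (⊤ : ℕ∞) f) (hA'' : ContDiff ℝ (⊤ : ℕ∞) A'')
    (ℓ : ℕ) (hℓ : 1 ≤ ℓ)
    (h : ∀ x, ‖gradient s x‖ ^ 2 = 1 + s x ^ ℓ * A x)
    (h' : ∀ x, ‖gradient (fun z => s z * (1 + s z ^ ℓ * f z)) x‖ ^ 2
            = 1 + s x ^ (ℓ + 1) * A'' x) :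
    ∃ g : EuclideanSpace ℝ (Fin n) → ℝ, ContDiff ℝ (⊤ : ℕ∞) g ∧
      ∀ x, f x = -A x / (2 * ((ℓ : ℝ) + 1)) + s x * g x := by
  obtain ⟨m, rfl⟩ := Nat.exists_eq_add_of_le' hℓ
  set c : ℝ := (m + 1 : ℕ) + 1
  -- `‖∇s'‖² - 1 - s^(m+1) (2cf + A)`, divided by `s^(m+2)`
  set R := fun x => s x ^ m * (2 * c * f x * A x + c ^ 2 * f x ^ 2)
    + s x ^ (2 * m + 1) * c ^ 2 * f x ^ 2 * A x
    + 2 * (1 + c * s x ^ (m + 1) * f x) * inner ℝ (gradient s x) (gradient f x)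
    + s x ^ (m + 2) * ‖gradient f x‖ ^ 2
  have hR : ContDiff ℝ (⊤ : ℕ∞) R := by
    have hDs := hs.gradient (m := (⊤ : ℕ∞)) (by simp)
    have hDf := hf.gradient (m := (⊤ : ℕ∞)) (by simp)
    have := hDs.inner ℝ hDf
    have := hDf.norm_sq ℝ
    fun_prop
  have hfactor : ∀ x, s x ^ (m + 1) * (2 * c * f x + A x + s x * (R x - A'' x))
      = s x ^ (m + 1) * 0 := by
    intro x
    have hx := h' x
    rw [((hs.differentiable (by simp) x).hasGradientAt.mul_one_add_pow_mul
      (hf.differentiable (by simp) x).hasGradientAt (m + 1)).gradient] at hx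
    simp only [norm_add_sq_real, norm_smul, mul_pow, Real.norm_eq_abs, sq_abs, h x,
      real_inner_smul_left, real_inner_smul_right] at hx
    linear_combination hx
  have hdense : Dense {x | s x ≠ 0} :=
    dense_setOf_ne_zero_of_gradient_ne_zero fun x hx h0 => by simpa [hx, h0] using h x
  have hbracket := hdense.eq_of_pow_mul_eq (by fun_prop) continuous_const (m + 1) hfactor
  refine ⟨fun x => (A'' x - R x) / (2 * c), (hA''.sub hR).div_const _, fun x => ?_⟩
  have hc : c ≠ 0 := by positivity
  field_simp
  linear_combination congrFun hbracket x

/-- Uniqueness assertion in the proof of Lemma 2.4 (flat background): if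
`‖∇s‖² = 1 + sˡ·A` and `s' := s·(1 + sˡ·f)` satisfies `‖∇s'‖² = 1 + s^(ℓ+1)·A''`
for smooth `A, f, A''`, then `f = -A/(2(ℓ+1)) + s·g` for a smooth function `g`. -/
theorem unit_defining_function_step_unique
    (n : ℕ) (hn : 1 ≤ n) (s A f A'' : EuclideanSpace ℝ (Fin n) → ℝ)
    (hs : ContDiff ℝ (⊤ : ℕ∞) s) (hA : ContDiff ℝ (⊤ : ℕ∞) A)
    (hf : ContDiff ℝ (⊤ : ℕ∞) f) (hA'' : ContDiff ℝ (⊤ : ℕ∞) A'')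
    (ℓ : ℕ) (hℓ : 1 ≤ ℓ)
    (h : ∀ x, ‖gradient s x‖ ^ 2 = 1 + s x ^ ℓ * A x)
    (h' : ∀ x, ‖gradient (fun z => s z * (1 + s z ^ ℓ * f z)) x‖ ^ 2
            = 1 + s x ^ (ℓ + 1) * A'' x) :
    ∃ g : EuclideanSpace ℝ (Fin n) → ℝ, ContDiff ℝ (⊤ : ℕ∞) g ∧
      ∀ x, f x = -A x / (2 * ((ℓ : ℝ) + 1)) + s x * g x :=
  unit_defining_function_step_unique_general n s A f A'' hs hA hf hA'' ℓ hℓ h h'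
end

section
/- Let d ≥ 3, let Ω ⊆ ℝ^d be open, and let σ₁, σ₂ : Ω → ℝ be C^∞ with σ₂ = σ₁ · v for a C^∞ function v : Ω → ℝ that is everywhere strictly positive. Define S(σ) := ‖∇σ‖² − (2/d)·σ·Δσ, and suppose that for i = 1, 2 there are C^∞ functions B_i with S(σ_i)(x) = 1 + σ_i(x)^d · B_i(x) for all x ∈ Ω (both σ₁ and σ₂ are conformal unit defining densities). Then there exists a C^∞ function φ : Ω → ℝ such that σ₂ = σ₁ + σ₁^(d+1) · φ. -/
/-!
Write `σ₂ = σ₁ v`. A direct computation gives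
`S(σ v) = v² S(σ) + 2 (1 - 2/d) σ v ⟨∇σ, ∇v⟩ + σ² (‖∇v‖² - (2/d) v Δv)`,
so the two unit conditions force `v² ≡ 1 mod σ`, hence `v ≡ 1 mod σ` because `v > 0`.
If `v = 1 + σ^k w` with `1 ≤ k < d`, the same identity divided by `σ^k` reads
`2 (k + 1) (1 - k/d) w ≡ 0 mod σ`, and the coefficient vanishes only at `k = d`,
so `v ≡ 1 mod σ^(k+1)`. Iterating up to `k = d` gives `σ₂ = σ₁ + σ₁^(d+1) φ`.
-/

/-- The Euclidean Laplacian of `f : ℝ^d → ℝ` at `x`: the trace of the second derivative. -/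
noncomputable def euclideanLaplacian {d : ℕ} (f : EuclideanSpace ℝ (Fin d) → ℝ)
    (x : EuclideanSpace ℝ (Fin d)) : ℝ :=
  ∑ i : Fin d, iteratedFDeriv ℝ 2 f x ![EuclideanSpace.single i 1, EuclideanSpace.single i 1]

/-- The flat-background singular Yamabe operator `S(σ) = ‖∇σ‖² - (2/d)·σ·Δσ`. -/
noncomputable def singularYamabeS {d : ℕ} (σ : EuclideanSpace ℝ (Fin d) → ℝ)
    (x : EuclideanSpace ℝ (Fin d)) : ℝ :=
  ‖gradient σ x‖ ^ 2 - (2 / (d : ℝ)) * σ x * euclideanLaplacian σ x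

open scoped ContDiff Gradient RealInnerProductSpace
open InnerProductSpace Laplacian Filter Topology

section Calculus

variable {E : Type*} [NormedAddCommGroup E] [InnerProductSpace ℝ E] {f g : E → ℝ} {x : E}
  {s : Set E}

theorem gradient_fun_mul [CompleteSpace E] (hf : DifferentiableAt ℝ f x)
    (hg : DifferentiableAt ℝ g x) :
    ∇ (fun y => f y * g y) x = f x • ∇ g x + g x • ∇ f x := by
  simp only [gradient, fderiv_fun_mul hf hg, map_add, map_smul]

theorem gradient_fun_pow_succ [CompleteSpace E] (hf : DifferentiableAt ℝ f x) (n : ℕ) :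
    ∇ (fun y => f y ^ (n + 1)) x = ((n + 1) * f x ^ n) • ∇ f x := by
  simp [gradient, fderiv_fun_pow _ hf, map_smul]

theorem gradient_fun_pow_succ_mul [CompleteSpace E] (hf : DifferentiableAt ℝ f x)
    (hg : DifferentiableAt ℝ g x) (n : ℕ) :
    ∇ (fun y => f y ^ (n + 1) * g y) x
      = f x ^ n • (((n + 1) * g x) • ∇ f x + f x • ∇ g x) := by
  rw [gradient_fun_mul (f := fun y => f y ^ (n + 1)) (hf.pow _) hg, gradient_fun_pow_succ hf]
  module

theorem gradient_fun_const_add [CompleteSpace E] (c : ℝ) :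
    ∇ (fun y => c + f y) x = ∇ f x := by
  simp [gradient, fderiv_const_add]

theorem ContDiffOn.gradient [CompleteSpace E] (hf : ContDiffOn ℝ ∞ f s) (hs : IsOpen s) :
    ContDiffOn ℝ ∞ (∇ f) s :=
  (InnerProductSpace.toDual ℝ E).symm.toContinuousLinearEquiv.contDiff.comp_contDiffOn
    (hf.fderiv_of_isOpen hs (by simp))

theorem iteratedFDeriv_two_apply_self (hf : ContDiffAt ℝ 2 f x) (u : E) :
    iteratedFDeriv ℝ 2 f x ![u, u] = fderiv ℝ (fun y => fderiv ℝ f y u) x u := by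
  have hf' : DifferentiableAt ℝ (fderiv ℝ f) x :=
    (hf.fderiv_right (m := 1) le_rfl).differentiableAt one_ne_zero
  rw [iteratedFDeriv_two_apply, fderiv_clm_apply hf' (differentiableAt_const u)]
  simp

theorem fderiv_fderiv_fun_mul_apply_self (hf : ContDiffAt ℝ 2 f x) (hg : ContDiffAt ℝ 2 g x)
    (u : E) :
    fderiv ℝ (fun y => fderiv ℝ (fun z => f z * g z) y u) x u
      = f x * fderiv ℝ (fun y => fderiv ℝ g y u) x u
        + 2 * (fderiv ℝ f x u * fderiv ℝ g x u)
        + g x * fderiv ℝ (fun y => fderiv ℝ f y u) x u := by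
  have hprod : (fun y => fderiv ℝ (fun z => f z * g z) y u)
      =ᶠ[𝓝 x] fun y => f y * fderiv ℝ g y u + g y * fderiv ℝ f y u := by
    filter_upwards [hf.eventually (by simp), hg.eventually (by simp)] with y hfy hgy
    rw [fderiv_fun_mul (hfy.differentiableAt two_ne_zero) (hgy.differentiableAt two_ne_zero)]
    simp
  have hdir : ∀ {h : E → ℝ}, ContDiffAt ℝ 2 h x →
      DifferentiableAt ℝ (fun y => fderiv ℝ h y u) x := fun hh =>
    ((hh.fderiv_right (m := 1) le_rfl).differentiableAt one_ne_zero).clm_apply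
      (differentiableAt_const u)
  have hf₁ := hf.differentiableAt two_ne_zero
  have hg₁ := hg.differentiableAt two_ne_zero
  have hfg' : DifferentiableAt ℝ (fun y => f y * fderiv ℝ g y u) x := hf₁.mul (hdir hg)
  have hgf' : DifferentiableAt ℝ (fun y => g y * fderiv ℝ f y u) x := hg₁.mul (hdir hf)
  rw [hprod.fderiv_eq, fderiv_fun_add hfg' hgf', fderiv_fun_mul hf₁ (hdir hg),
    fderiv_fun_mul hg₁ (hdir hf)]
  simp only [add_apply, smul_apply, smul_eq_mul]
  ring

variable [FiniteDimensional ℝ E]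

theorem ContDiffAt.laplacian_fun_mul (hf : ContDiffAt ℝ 2 f x) (hg : ContDiffAt ℝ 2 g x) :
    Δ (fun y => f y * g y) x = f x * Δ g x + 2 * ⟪∇ f x, ∇ g x⟫ + g x * Δ f x := by
  have hinner : ⟪∇ f x, ∇ g x⟫ = ∑ i, fderiv ℝ f x (stdOrthonormalBasis ℝ E i)
      * fderiv ℝ g x (stdOrthonormalBasis ℝ E i) := by
    rw [← (stdOrthonormalBasis ℝ E).sum_inner_mul_inner]
    refine Finset.sum_congr rfl fun i _ => ?_
    rw [inner_gradient_left, real_inner_comm, inner_gradient_left]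
  simp only [laplacian_eq_iteratedFDeriv_stdOrthonormalBasis,
    iteratedFDeriv_two_apply_self hf, iteratedFDeriv_two_apply_self hg,
    iteratedFDeriv_two_apply_self (hf.mul hg), fderiv_fderiv_fun_mul_apply_self hf hg, hinner,
    Finset.sum_add_distrib, Finset.mul_sum]

theorem ContDiffAt.laplacian_fun_const_add (hf : ContDiffAt ℝ 2 f x) (c : ℝ) :
    Δ (fun y => c + f y) x = Δ f x := by
  have h := (contDiffAt_const (c := c)).laplacian_add hf
  simp only [laplacian_const, Pi.zero_apply, zero_add] at h
  exact h

theorem ContDiffAt.mul_laplacian_fun_pow_succ (hf : ContDiffAt ℝ 2 f x) (n : ℕ) :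
    f x * Δ (fun y => f y ^ (n + 1)) x
      = (n + 1) * f x ^ n * (n * ‖∇ f x‖ ^ 2 + f x * Δ f x) := by
  induction n with
  | zero => simp
  | succ n ih =>
    have hpow : (fun y => f y ^ (n + 1 + 1)) = fun y => f y * f y ^ (n + 1) := by
      funext y; ring
    rw [hpow, hf.laplacian_fun_mul (g := fun y => f y ^ (n + 1)) (hf.pow _),
      gradient_fun_pow_succ (hf.differentiableAt two_ne_zero), inner_smul_right,
      real_inner_self_eq_norm_sq]
    push_cast
    linear_combination f x * ih

theorem ContDiffAt.mul_laplacian_fun_pow_succ_mul (hf : ContDiffAt ℝ 2 f x)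
    (hg : ContDiffAt ℝ 2 g x) (n : ℕ) :
    f x * Δ (fun y => f y ^ (n + 1) * g y) x
      = f x ^ n * ((n + 1) * n * g x * ‖∇ f x‖ ^ 2
        + f x * (2 * (n + 1) * ⟪∇ f x, ∇ g x⟫ + (n + 1) * g x * Δ f x
          + f x * Δ g x)) := by
  rw [(hf.pow (n + 1)).laplacian_fun_mul (f := fun y => f y ^ (n + 1)) hg,
    gradient_fun_pow_succ (hf.differentiableAt two_ne_zero), inner_smul_left]
  simp only [RCLike.conj_to_real]
  linear_combination g x * hf.mul_laplacian_fun_pow_succ n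

theorem ContDiffOn.laplacian (hf : ContDiffOn ℝ ∞ f s) (hs : IsOpen s) :
    ContDiffOn ℝ ∞ (Δ f) s := by
  rw [laplacian_eq_iteratedFDeriv_stdOrthonormalBasis]
  intro x hx
  have h := (hf.contDiffAt (hs.mem_nhds hx)).iteratedFDeriv_right (m := ∞) (i := 2)
    le_rfl
  exact (ContDiffAt.sum fun i _ =>
    (ContinuousMultilinearMap.apply ℝ _ ℝ _).contDiff.contDiffAt.comp x h).contDiffWithinAt

end Calculus

section SingularYamabe

variable {d : ℕ} {Ω : Set (EuclideanSpace ℝ (Fin d))}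
  {σ τ v w : EuclideanSpace ℝ (Fin d) → ℝ} {x : EuclideanSpace ℝ (Fin d)}

theorem euclideanLaplacian_eq_laplacian (f : EuclideanSpace ℝ (Fin d) → ℝ) :
    euclideanLaplacian f = Δ f := by
  rw [laplacian_eq_iteratedFDeriv_orthonormalBasis f (EuclideanSpace.basisFun (Fin d) ℝ)]
  ext x
  simp [euclideanLaplacian]

theorem singularYamabeS_eq :
    singularYamabeS σ x = ‖∇ σ x‖ ^ 2 - 2 / d * σ x * Δ σ x := by
  rw [singularYamabeS, euclideanLaplacian_eq_laplacian]

theorem Filter.EventuallyEq.singularYamabeS_eq (h : σ =ᶠ[𝓝 x] τ) :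
    singularYamabeS σ x = singularYamabeS τ x := by
  simp only [_root_.singularYamabeS_eq, h.gradient_eq, (laplacian_congr_nhds h).eq_of_nhds,
    h.eq_of_nhds]

theorem ContDiffAt.singularYamabeS_fun_mul (hσ : ContDiffAt ℝ 2 σ x)
    (hv : ContDiffAt ℝ 2 v x) :
    singularYamabeS (fun y => σ y * v y) x
      = v x ^ 2 * singularYamabeS σ x + 2 * (1 - 2 / d) * σ x * v x * ⟪∇ σ x, ∇ v x⟫
        + σ x ^ 2 * (‖∇ v x‖ ^ 2 - 2 / d * v x * Δ v x) := by
  simp only [singularYamabeS_eq, hσ.laplacian_fun_mul hv,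
    gradient_fun_mul (hσ.differentiableAt two_ne_zero) (hv.differentiableAt two_ne_zero),
    ← real_inner_self_eq_norm_sq, inner_add_left, inner_add_right, inner_smul_left,
    inner_smul_right, real_inner_comm (∇ σ x), RCLike.conj_to_real]
  ring

theorem one_sub_sq_add_pow_mul_eq_of_singularYamabeS (hσ : ContDiffAt ℝ 2 σ x)
    (hv : ContDiffAt ℝ 2 v x) {b₁ b₂ : ℝ}
    (h₁ : singularYamabeS σ x = 1 + σ x ^ d * b₁)
    (h₂ : singularYamabeS (fun y => σ y * v y) x = 1 + (σ x * v x) ^ d * b₂) :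
    1 - v x ^ 2 + σ x ^ d * (v x ^ d * b₂ - v x ^ 2 * b₁)
      = 2 * (1 - 2 / d) * σ x * v x * ⟪∇ σ x, ∇ v x⟫
        + σ x ^ 2 * (‖∇ v x‖ ^ 2 - 2 / d * v x * Δ v x) := by
  rw [hσ.singularYamabeS_fun_mul hv] at h₂
  linear_combination v x ^ 2 * h₁ - h₂

def IsConformalUnitDensityOn (Ω : Set (EuclideanSpace ℝ (Fin d)))
    (σ : EuclideanSpace ℝ (Fin d) → ℝ) : Prop :=
  ∃ B, ContDiffOn ℝ ∞ B Ω ∧ ∀ x ∈ Ω, singularYamabeS σ x = 1 + σ x ^ d * B x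

theorem exists_eq_one_add_mul_of_isConformalUnitDensityOn (hd : 0 < d) (hΩ : IsOpen Ω)
    (hσ : ContDiffOn ℝ ∞ σ Ω) (hv : ContDiffOn ℝ ∞ v Ω) (hvpos : ∀ x ∈ Ω, 0 < v x)
    (h₁ : IsConformalUnitDensityOn Ω σ)
    (h₂ : IsConformalUnitDensityOn Ω (fun y => σ y * v y)) :
    ∃ w, ContDiffOn ℝ ∞ w Ω ∧ ∀ x ∈ Ω, v x = 1 + σ x * w x := by
  obtain ⟨B₁, hB₁, h₁⟩ := h₁
  obtain ⟨B₂, hB₂, h₂⟩ := h₂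
  refine ⟨fun y => (σ y ^ (d - 1) * (v y ^ d * B₂ y - v y ^ 2 * B₁ y)
      - 2 * (1 - 2 / d) * v y * ⟪∇ σ y, ∇ v y⟫
      - σ y * (‖∇ v y‖ ^ 2 - 2 / d * v y * Δ v y)) / (v y + 1), ?_, fun x hx => ?_⟩
  · have := (hσ.gradient hΩ).inner ℝ (hv.gradient hΩ)
    have := (hv.gradient hΩ).norm_sq ℝ
    have := hv.laplacian hΩ
    exact ContDiffOn.div (by fun_prop) (by fun_prop) fun y hy => by linarith [hvpos y hy]
  · have hx' := hΩ.mem_nhds hx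
    have hdefect := one_sub_sq_add_pow_mul_eq_of_singularYamabeS
      ((hσ.contDiffAt hx').of_le (by decide)) ((hv.contDiffAt hx').of_le (by decide))
      (h₁ x hx) (h₂ x hx)
    have hpow : σ x ^ d = σ x * σ x ^ (d - 1) := by rw [← pow_succ', Nat.sub_add_cancel hd]
    rw [← sub_eq_iff_eq_add', ← mul_div_assoc, eq_div_iff (by linarith [hvpos x hx])]
    linear_combination -hdefect + (v x ^ d * B₂ x - v x ^ 2 * B₁ x) * hpow

/-- If `v = 1 + σ^(n+1) w`, the identity `one_sub_sq_add_pow_mul_eq_of_singularYamabeS`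
divided by `σ^(n+1)` reads `c w = σ N` with `c = 2 (n + 2) (1 - (n + 1)/d)` and `N` the
numerator below, hence `v = 1 + σ^(n+2) (N / c)`. -/
noncomputable def nextCoeff (d n : ℕ) (σ v w B₁ B₂ : EuclideanSpace ℝ (Fin d) → ℝ)
    (y : EuclideanSpace ℝ (Fin d)) : ℝ :=
  (σ y ^ (d - (n + 2)) * (v y ^ d * B₂ y - v y ^ 2 * B₁ y)
      - σ y ^ n * (w y ^ 2 + ‖((n + 1) * w y) • ∇ σ y + σ y • ∇ w y‖ ^ 2)
      - 2 * (n + 1) * (1 - (n + 2) / d) * w y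
        * (2 / d * Δ σ y + σ y ^ (d - 1) * B₁ y + σ y ^ n * w y * ‖∇ σ y‖ ^ 2)
      - v y * (2 * ⟪∇ σ y, ∇ w y⟫
        - 2 / d * (2 * (n + 2) * ⟪∇ σ y, ∇ w y⟫ + (n + 1) * w y * Δ σ y
          + σ y * Δ w y)))
    / (2 * (n + 2) * (1 - (n + 1) / d))

theorem eq_one_add_pow_mul_nextCoeff {n : ℕ} (hnd : n + 2 ≤ d)
    {B₁ B₂ : EuclideanSpace ℝ (Fin d) → ℝ}
    (hσ : ContDiffAt ℝ 2 σ x) (hw : ContDiffAt ℝ 2 w x)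
    (h₁ : singularYamabeS σ x = 1 + σ x ^ d * B₁ x)
    (h₂ : singularYamabeS (fun y => σ y * v y) x = 1 + (σ x * v x) ^ d * B₂ x)
    (hvw : v =ᶠ[𝓝 x] fun y => 1 + σ y ^ (n + 1) * w y) :
    v x = 1 + σ x ^ (n + 2) * nextCoeff d n σ v w B₁ B₂ x := by
  have hv : ContDiffAt ℝ 2 v x :=
    (contDiffAt_const.add ((hσ.pow _).mul hw)).congr_of_eventuallyEq hvw
  have hgrad : ∇ v x = σ x ^ n • (((n + 1) * w x) • ∇ σ x + σ x • ∇ w x) := by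
    rw [hvw.gradient_eq, gradient_fun_const_add,
      gradient_fun_pow_succ_mul (hσ.differentiableAt two_ne_zero)
        (hw.differentiableAt two_ne_zero)]
  have hlap := hσ.mul_laplacian_fun_pow_succ_mul hw n
  rw [← ((hσ.pow _).mul hw).laplacian_fun_const_add 1,
    ← (laplacian_congr_nhds hvw).eq_of_nhds] at hlap
  have hdefect := one_sub_sq_add_pow_mul_eq_of_singularYamabeS hσ hv h₁ h₂
  rw [hgrad, inner_smul_right, norm_smul, inner_add_right, inner_smul_right, inner_smul_right,
    real_inner_self_eq_norm_sq, mul_pow, Real.norm_eq_abs, sq_abs] at hdefect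
  rw [singularYamabeS_eq] at h₁
  have hvx : v x = 1 + σ x ^ (n + 1) * w x := hvw.eq_of_nhds
  have hc : (2 : ℝ) * (n + 2) * (1 - (n + 1) / d) ≠ 0 := by
    have hd : (n : ℝ) + 2 ≤ d := by exact_mod_cast hnd
    have : ((n : ℝ) + 1) / d < 1 := (div_lt_one (by linarith)).mpr (by linarith)
    have : (0 : ℝ) < 1 - (n + 1) / d := by linarith
    positivity
  have hpow₁ : σ x ^ d = σ x ^ (n + 2) * σ x ^ (d - (n + 2)) := by
    rw [← pow_add, Nat.add_sub_cancel' hnd]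
  have hpow₂ : σ x ^ (d - 1) = σ x ^ (n + 1) * σ x ^ (d - (n + 2)) := by
    rw [← pow_add]
    congr 1
    omega
  rw [hpow₁] at hdefect h₁
  rw [nextCoeff, hpow₂, ← sub_eq_iff_eq_add', ← mul_div_assoc, eq_div_iff hc]
  linear_combination (2 * (n + 2) * (1 - (n + 1) / d) - 1 - σ x ^ (n + 1) * w x - v x
      - 2 * (n + 1) * (1 - (n + 2) / d) * σ x ^ (n + 1) * w x * ‖∇ σ x‖ ^ 2) * hvx
    - hdefect + (2 / d * v x * σ x) * hlap
    - 2 * (n + 1) * (1 - (n + 2) / d) * σ x ^ (n + 1) * w x * h₁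

theorem ContDiffOn.nextCoeff {n : ℕ} {B₁ B₂ : EuclideanSpace ℝ (Fin d) → ℝ}
    (hσ : ContDiffOn ℝ ∞ σ Ω) (hΩ : IsOpen Ω) (hv : ContDiffOn ℝ ∞ v Ω)
    (hw : ContDiffOn ℝ ∞ w Ω) (hB₁ : ContDiffOn ℝ ∞ B₁ Ω)
    (hB₂ : ContDiffOn ℝ ∞ B₂ Ω) :
    ContDiffOn ℝ ∞ (nextCoeff d n σ v w B₁ B₂) Ω := by
  have hgσ := hσ.gradient hΩ
  have hgw := hw.gradient hΩ
  have hW : ContDiffOn ℝ ∞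
      (fun y => ((n + 1 : ℝ) * w y) • ∇ σ y + σ y • ∇ w y) Ω := by
    fun_prop
  have := hgσ.norm_sq ℝ
  have := hgσ.inner ℝ hgw
  have := hW.norm_sq ℝ
  have := hσ.laplacian hΩ
  have := hw.laplacian hΩ
  unfold _root_.nextCoeff
  fun_prop

theorem exists_eq_one_add_pow_mul_of_isConformalUnitDensityOn (hΩ : IsOpen Ω)
    (hσ : ContDiffOn ℝ ∞ σ Ω) (hv : ContDiffOn ℝ ∞ v Ω) (hvpos : ∀ x ∈ Ω, 0 < v x)
    (h₁ : IsConformalUnitDensityOn Ω σ)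
    (h₂ : IsConformalUnitDensityOn Ω (fun y => σ y * v y)) {k : ℕ} (hk : k ≤ d) :
    ∃ w, ContDiffOn ℝ ∞ w Ω ∧ ∀ x ∈ Ω, v x = 1 + σ x ^ k * w x := by
  induction k with
  | zero => exact ⟨fun y => v y - 1, hv.sub contDiffOn_const, fun x _ => by ring⟩
  | succ k ih =>
    cases k with
    | zero =>
      simpa using exists_eq_one_add_mul_of_isConformalUnitDensityOn hk hΩ hσ hv hvpos h₁ h₂
    | succ n =>
      obtain ⟨w, hw, hvw⟩ := ih (by omega)
      obtain ⟨B₁, hB₁, h₁⟩ := h₁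
      obtain ⟨B₂, hB₂, h₂⟩ := h₂
      refine ⟨nextCoeff d n σ v w B₁ B₂, hσ.nextCoeff hΩ hv hw hB₁ hB₂,
        fun x hx => ?_⟩
      have hx' := hΩ.mem_nhds hx
      exact eq_one_add_pow_mul_nextCoeff hk ((hσ.contDiffAt hx').of_le (by decide))
        ((hw.contDiffAt hx').of_le (by decide)) (h₁ x hx) (h₂ x hx)
        (eventually_of_mem hx' hvw)

end SingularYamabe

theorem conformal_unit_defining_density_unique_general
    (d : ℕ) (Ω : Set (EuclideanSpace ℝ (Fin d))) (hΩ : IsOpen Ω)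
    (σ₁ σ₂ v : EuclideanSpace ℝ (Fin d) → ℝ)
    (hσ₁ : ContDiffOn ℝ (⊤ : ℕ∞) σ₁ Ω)
    (hv : ContDiffOn ℝ (⊤ : ℕ∞) v Ω) (hvpos : ∀ x ∈ Ω, 0 < v x)
    (hfac : ∀ x ∈ Ω, σ₂ x = σ₁ x * v x)
    (B₁ B₂ : EuclideanSpace ℝ (Fin d) → ℝ)
    (hB₁ : ContDiffOn ℝ (⊤ : ℕ∞) B₁ Ω) (hB₂ : ContDiffOn ℝ (⊤ : ℕ∞) B₂ Ω)
    (h₁ : ∀ x ∈ Ω, singularYamabeS σ₁ x = 1 + σ₁ x ^ d * B₁ x)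
    (h₂ : ∀ x ∈ Ω, singularYamabeS σ₂ x = 1 + σ₂ x ^ d * B₂ x) :
    ∃ φ : EuclideanSpace ℝ (Fin d) → ℝ, ContDiffOn ℝ (⊤ : ℕ∞) φ Ω ∧
      ∀ x ∈ Ω, σ₂ x = σ₁ x + σ₁ x ^ (d + 1) * φ x := by
  have hσ₂ : IsConformalUnitDensityOn Ω (fun y => σ₁ y * v y) := by
    refine ⟨B₂, hB₂, fun x hx => ?_⟩
    have hfac' : σ₂ =ᶠ[𝓝 x] fun y => σ₁ y * v y :=
      eventually_of_mem (hΩ.mem_nhds hx) hfac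
    rw [← hfac'.singularYamabeS_eq, h₂ x hx, hfac x hx]
  obtain ⟨φ, hφ, hvφ⟩ := exists_eq_one_add_pow_mul_of_isConformalUnitDensityOn hΩ hσ₁ hv
    hvpos ⟨B₁, hB₁, h₁⟩ hσ₂ le_rfl
  refine ⟨φ, hφ, fun x hx => ?_⟩
  rw [hfac x hx, hvφ x hx]
  ring

/-- Uniqueness part of Theorem 4.6 (flat background): if `σ₁` and `σ₂ = σ₁·v` (with `v`
smooth and everywhere positive) are both conformal unit defining densities
(`S(σᵢ) = 1 + σᵢ^d·Bᵢ` on `Ω`), then `σ₂ = σ₁ + σ₁^(d+1)·φ` for a smooth function `φ`. -/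
theorem conformal_unit_defining_density_unique
    (d : ℕ) (hd : 3 ≤ d) (Ω : Set (EuclideanSpace ℝ (Fin d))) (hΩ : IsOpen Ω)
    (σ₁ σ₂ v : EuclideanSpace ℝ (Fin d) → ℝ)
    (hσ₁ : ContDiffOn ℝ (⊤ : ℕ∞) σ₁ Ω) (hσ₂ : ContDiffOn ℝ (⊤ : ℕ∞) σ₂ Ω)
    (hv : ContDiffOn ℝ (⊤ : ℕ∞) v Ω) (hvpos : ∀ x ∈ Ω, 0 < v x)
    (hfac : ∀ x ∈ Ω, σ₂ x = σ₁ x * v x)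
    (B₁ B₂ : EuclideanSpace ℝ (Fin d) → ℝ)
    (hB₁ : ContDiffOn ℝ (⊤ : ℕ∞) B₁ Ω) (hB₂ : ContDiffOn ℝ (⊤ : ℕ∞) B₂ Ω)
    (h₁ : ∀ x ∈ Ω, singularYamabeS σ₁ x = 1 + σ₁ x ^ d * B₁ x)
    (h₂ : ∀ x ∈ Ω, singularYamabeS σ₂ x = 1 + σ₂ x ^ d * B₂ x) :
    ∃ φ : EuclideanSpace ℝ (Fin d) → ℝ, ContDiffOn ℝ (⊤ : ℕ∞) φ Ω ∧
      ∀ x ∈ Ω, σ₂ x = σ₁ x + σ₁ x ^ (d + 1) * φ x :=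
  conformal_unit_defining_density_unique_general d Ω hΩ σ₁ σ₂ v hσ₁ hv hvpos hfac B₁ B₂ hB₁ hB₂ h₁
    h₂
end
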